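/- Let c : Fin p → ℕ be a nonincreasing sequence of positive integers, with h, har, g defined as the Hirsch, harmonic, and Egghe indices respectively. Then h ≤ har ≤ g. -/
import Mathlib

lemma card_lt_filter_aux (p k : ℕ) (hk : k ≤ p) :
    (Finset.univ.filter (fun j : Fin p => (j : ℕ) < k)).card = k := by
  rw [Finset.card_filter,
    Fin.sum_univ_eq_sum_range (fun i => if i < k then 1 else 0), ← Finset.card_filter,
    show (Finset.range p).filter (· < k) = Finset.range k from by
      ext x; simp only [Finset.mem_filter, Finset.mem_range]; omega,
    Finset.card_range]

/-- `h ≤ har ≤ g` for the Hirsch, harmonic and Egghe indices. -/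
theorem stmt_5 (p : ℕ) (c : Fin p → ℕ) (hmono : Antitone c) (hpos : ∀ i, 0 < c i)
    (h har g : ℕ)
    (hh : IsGreatest {m : ℕ | 1 ≤ m ∧ m ≤ p ∧ ∃ hm : m - 1 < p, m ≤ c ⟨m - 1, hm⟩} h)
    (hhar : IsGreatest {k : ℕ | 1 ≤ k ∧ k ≤ p ∧
      ∑ j ∈ Finset.univ.filter (fun j : Fin p => (j : ℕ) < k), (1 : ℝ) / (c j) ≤ 1} har)
    (hg : IsGreatest {k : ℕ | 1 ≤ k ∧ k ≤ p ∧
      k ^ 2 ≤ ∑ j ∈ Finset.univ.filter (fun j : Fin p => (j : ℕ) < k), c j} g) :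
    h ≤ har ∧ har ≤ g := by
  obtain ⟨⟨h1, hp, hm, hch⟩, _⟩ := hh
  constructor
  · -- h ≤ har : show h ∈ harmonic set
    apply hhar.2
    refine ⟨h1, hp, ?_⟩
    have hb : ∀ j ∈ Finset.univ.filter (fun j : Fin p => (j : ℕ) < h),
        (1 : ℝ) / (c j) ≤ 1 / h := by
      intro j hj
      simp only [Finset.mem_filter] at hj
      have hle : c ⟨h - 1, hm⟩ ≤ c j := hmono (by simp [Fin.le_def]; omega)
      have : (h : ℝ) ≤ (c j : ℝ) := by exact_mod_cast le_trans hch hle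
      apply div_le_div_of_nonneg_left (by norm_num) (by positivity) this
    calc ∑ j ∈ Finset.univ.filter (fun j : Fin p => (j : ℕ) < h), (1 : ℝ) / (c j)
        ≤ (Finset.univ.filter (fun j : Fin p => (j : ℕ) < h)).card • ((1 : ℝ) / h) :=
          Finset.sum_le_card_nsmul _ _ _ hb
      _ = (h : ℝ) * (1 / h) := by rw [card_lt_filter_aux p h hp, nsmul_eq_mul]
      _ ≤ 1 := by
          rw [mul_one_div, div_self (by positivity)]
  · -- har ≤ g : show har ∈ Egghe set
    obtain ⟨⟨k1, kp, ksum⟩, _⟩ := hhar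
    apply hg.2
    refine ⟨k1, kp, ?_⟩
    set s := Finset.univ.filter (fun j : Fin p => (j : ℕ) < har) with hs
    have cauchy : (∑ j ∈ s, (1 : ℝ)) ^ 2 ≤ (∑ j ∈ s, (c j : ℝ)) * ∑ j ∈ s, (1 : ℝ) / (c j) :=
      Finset.sum_sq_le_sum_mul_sum_of_sq_eq_mul s
        (fun i _ => by positivity) (fun i _ => by positivity)
        (fun i _ => by
          have := hpos i
          field_simp)
    have hcard : (∑ j ∈ s, (1 : ℝ)) = (har : ℝ) := by
      rw [Finset.sum_const, card_lt_filter_aux p har kp]; simp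
    have key : (har : ℝ) ^ 2 ≤ ∑ j ∈ s, (c j : ℝ) := by
      calc (har : ℝ) ^ 2 = (∑ j ∈ s, (1 : ℝ)) ^ 2 := by rw [hcard]
        _ ≤ (∑ j ∈ s, (c j : ℝ)) * ∑ j ∈ s, (1 : ℝ) / (c j) := cauchy
        _ ≤ (∑ j ∈ s, (c j : ℝ)) * 1 := by
            apply mul_le_mul_of_nonneg_left ksum (Finset.sum_nonneg fun i _ => by positivity)
        _ = ∑ j ∈ s, (c j : ℝ) := mul_one _
    exact_mod_cast key
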